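/- arXiv:2207.11503 — 5 statements merged into one kernel-verified Lean document; each statement's English description precedes it below -/
import Mathlib

section
/- Under the stated orthonormality and completeness assumptions, the beta constants satisfy the associativity relation ∑_{i} (β n m i) * (β i k l) = ∑_{i} (β n k i) * (β i m l) for all indices n, m, k, l. -/
/-!
Read `E` as a matrix with rows `E k`. Completeness says `Eᵀ * E = C • 1`, so the coefficient map
`f ↦ E *ᵥ f` multiplies dot products by `C` (Parseval). Since `β n m = C⁻¹ • E *ᵥ (E n * E m)`,
both sides of the relation equal `C⁻¹ ^ 2 * C * ∑ j, E n j * E m j * E k j * E l j`, which is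
symmetric in all four indices.
-/

open Matrix

theorem Matrix.transpose_mul_self_eq_smul_one {κ ι R : Type*} [Fintype κ] [DecidableEq ι]
    [CommSemiring R] {E : Matrix κ ι R} {C : R}
    (hcomp : ∀ i j : ι, ∑ k, E k i * E k j = C * if i = j then 1 else 0) :
    Eᵀ * E = C • 1 := by
  ext i j
  simp only [mul_apply, transpose_apply, hcomp, smul_apply, one_apply, smul_eq_mul]

theorem Matrix.mulVec_dotProduct_mulVec_of_transpose_mul_self_eq_smul {κ ι R : Type*}
    [Fintype κ] [Fintype ι] [DecidableEq ι] [CommSemiring R] {E : Matrix κ ι R} {C : R}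
    (hE : Eᵀ * E = C • 1) (f g : ι → R) :
    E *ᵥ f ⬝ᵥ E *ᵥ g = C * (f ⬝ᵥ g) := by
  rw [dotProduct_mulVec, ← vecMul_transpose, vecMul_vecMul, hE, vecMul_smul, vecMul_one,
    smul_dotProduct, smul_eq_mul]

theorem sum_beta_mul_beta {ι R : Type*} [Fintype ι] [DecidableEq ι] [CommSemiring R]
    {E : Matrix ι ι R} {C c : R} {β : ι → ι → ι → R}
    (hcomp : ∀ i j : ι, ∑ k, E k i * E k j = C * if i = j then 1 else 0)
    (hβ : ∀ n m k : ι, β n m k = c * ∑ i, E n i * E m i * E k i) (n m k l : ι) :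
    ∑ i, β n m i * β i k l = c ^ 2 * C * ∑ j, E n j * E m j * (E k j * E l j) := by
  have hβ_left : ∀ i, β n m i = c * (E *ᵥ (E n * E m)) i := fun i => by
    simp only [hβ, mulVec, dotProduct, Pi.mul_apply, mul_comm (E i _)]
  have hβ_right : ∀ i, β i k l = c * (E *ᵥ (E k * E l)) i := fun i => by
    simp only [hβ, mulVec, dotProduct, Pi.mul_apply, mul_assoc]
  calc ∑ i, β n m i * β i k l
      = c ^ 2 * (E *ᵥ (E n * E m) ⬝ᵥ E *ᵥ (E k * E l)) := by
        simp only [hβ_left, hβ_right, dotProduct, Finset.mul_sum]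
        exact Finset.sum_congr rfl fun i _ => by ring
    _ = c ^ 2 * C * ∑ j, E n j * E m j * (E k j * E l j) := by
        rw [mulVec_dotProduct_mulVec_of_transpose_mul_self_eq_smul
          (transpose_mul_self_eq_smul_one hcomp), mul_assoc]
        rfl

theorem beta_assoc_general (N : ℕ) (C : ℝ)
    (E : Fin N → Fin N → ℝ)
    (hcomp : ∀ i j : Fin N, ∑ k, E k i * E k j = C * if i = j then 1 else 0)
    (β : Fin N → Fin N → Fin N → ℝ)
    (hβ : ∀ n m k : Fin N, β n m k = (1 / C) * ∑ i, E n i * E m i * E k i) :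
    ∀ (n m k l : Fin N), ∑ i, β n m i * β i k l = ∑ i, β n k i * β i m l := by
  intro n m k l
  rw [sum_beta_mul_beta hcomp hβ, sum_beta_mul_beta hcomp hβ]
  exact congrArg _ (Finset.sum_congr rfl fun j _ => by ring)

/-- Associativity relation of the beta constants:
`∑ i, β n m i * β i k l = ∑ i, β n k i * β i m l`. -/
theorem beta_assoc (N : ℕ) (hN : 0 < N) (C : ℝ) (hC : 0 < C)
    (E : Fin N → Fin N → ℝ)
    (horth : ∀ k l : Fin N, (1 / C) * ∑ i, E k i * E l i = if k = l then 1 else 0)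
    (hcomp : ∀ i j : Fin N, ∑ k, E k i * E k j = C * if i = j then 1 else 0)
    (β : Fin N → Fin N → Fin N → ℝ)
    (hβ : ∀ n m k : Fin N, β n m k = (1 / C) * ∑ i, E n i * E m i * E k i) :
    ∀ (n m k l : Fin N), ∑ i, β n m i * β i k l = ∑ i, β n k i * β i m l :=
  beta_assoc_general N C E hcomp β hβ
end

section
/- Under the stated orthonormality and completeness assumptions, for all indices m, k, p one has the triple contraction identity ∑_{i, n, l} (β m n i) * (β i k l) * (β n l p) = C * (β m k p). -/
/-!
Read `β n m k` as the `k`-th coefficient of the function `e_n e_m` in the basis `(e_k)`.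
Completeness then gives Parseval's identity `∑ₖ ⟨f, e_k⟩ ⟨g, e_k⟩ / C² = ⟨f, g⟩ / C`, where
`⟨f, g⟩ = ∑ᵢ f(xᵢ) g(xᵢ)`. Applied to the sum over `l` and then to the sum over `i`, it collapses
the left side to `(1/C) ∑ₐ eₘ eₖ eₚ (∑ₙ eₙ²)` evaluated at the nodes, and the diagonal of
completeness, `∑ₙ eₙ(xₐ)² = C`, finishes the computation.
-/

open Finset

section TripleProduct

variable {ι κ K : Type*} [Fintype ι] [Field K]

def tripleProduct (C : K) (E : κ → ι → K) (n m k : κ) : K :=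
  1 / C * ∑ i, E n i * E m i * E k i

theorem tripleProduct_swap_right (C : K) (E : κ → ι → K) (n m k : κ) :
    tripleProduct C E n m k = tripleProduct C E n k m := by
  simp only [tripleProduct, mul_right_comm _ (E m _)]

variable [Fintype κ] [DecidableEq ι] {C : K} {E : κ → ι → K}

theorem sum_mul_sum_eq_of_completeness
    (hcomp : ∀ i j, ∑ k, E k i * E k j = C * if i = j then 1 else 0) (f g : ι → K) :
    ∑ k, (1 / C * ∑ a, f a * E k a) * (1 / C * ∑ a, g a * E k a) = 1 / C * ∑ a, f a * g a := by
  calc ∑ k, (1 / C * ∑ a, f a * E k a) * (1 / C * ∑ a, g a * E k a)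
      = 1 / C * (1 / C) * ∑ a, ∑ b, f a * g b * ∑ k, E k a * E k b := by
        simp_rw [mul_mul_mul_comm (1 / C), ← mul_sum, sum_mul_sum]
        rw [sum_comm]
        refine congrArg _ (sum_congr rfl fun a _ => ?_)
        simp_rw [mul_sum]
        rw [sum_comm]
        exact sum_congr rfl fun b _ => sum_congr rfl fun k _ => by ring
    _ = 1 / C * (1 / C) * C * ∑ a, f a * g a := by
        simp only [hcomp, mul_ite, mul_one, mul_zero, sum_ite_eq, mem_univ, if_true, ← sum_mul]
        ring
    _ = 1 / C * ∑ a, f a * g a := by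
        rw [one_div, show C⁻¹ * C⁻¹ * C = C⁻¹ by simpa [mul_right_comm] using mul_inv_mul_cancel C⁻¹]

variable (hcomp : ∀ i j, ∑ k, E k i * E k j = C * if i = j then 1 else 0)
include hcomp

theorem sum_tripleProduct_mul_tripleProduct (i k n p : κ) :
    ∑ l, tripleProduct C E i k l * tripleProduct C E n l p
      = 1 / C * ∑ a, E i a * E k a * (E n a * E p a) := by
  simp only [tripleProduct_swap_right C E n _ p]
  exact sum_mul_sum_eq_of_completeness hcomp (fun a => E i a * E k a) (fun a => E n a * E p a)

theorem sum_tripleProduct_contraction (m k p : κ) :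
    ∑ i, ∑ n, ∑ l, tripleProduct C E m n i * tripleProduct C E i k l * tripleProduct C E n l p
      = C * tripleProduct C E m k p := by
  have hnorm : ∀ a, ∑ n, E n a * E n a = C := fun a => by simpa using hcomp a a
  calc ∑ i, ∑ n, ∑ l, tripleProduct C E m n i * tripleProduct C E i k l * tripleProduct C E n l p
      = ∑ n, ∑ i, tripleProduct C E m n i * (1 / C * ∑ a, E k a * E n a * E p a * E i a) := by
        rw [sum_comm]
        simp_rw [mul_assoc, ← mul_sum, sum_tripleProduct_mul_tripleProduct hcomp]
        exact sum_congr rfl fun n _ => sum_congr rfl fun i _ =>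
          congrArg _ (congrArg _ (sum_congr rfl fun a _ => by ring))
    _ = ∑ n, 1 / C * ∑ a, E m a * E n a * (E k a * E n a * E p a) := by
        simp only [tripleProduct]
        simp_rw [sum_mul_sum_eq_of_completeness hcomp]
    _ = 1 / C * ∑ a, E m a * E k a * E p a * ∑ n, E n a * E n a := by
        rw [← mul_sum, sum_comm]
        simp_rw [mul_sum]
        exact sum_congr rfl fun a _ => sum_congr rfl fun n _ => by ring
    _ = C * tripleProduct C E m k p := by
        simp only [hnorm, tripleProduct, ← sum_mul]
        ring

end TripleProduct

theorem beta_triple_contraction_general (N : ℕ) (C : ℝ)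
    (E : Fin N → Fin N → ℝ)
    (hcomp : ∀ i j : Fin N, ∑ k, E k i * E k j = C * if i = j then 1 else 0)
    (β : Fin N → Fin N → Fin N → ℝ)
    (hβ : ∀ n m k : Fin N, β n m k = (1 / C) * ∑ i, E n i * E m i * E k i) :
    ∀ (m k p : Fin N),
      ∑ i, ∑ n, ∑ l, β m n i * β i k l * β n l p = C * β m k p := by
  obtain rfl : β = tripleProduct C E := funext₃ hβ
  exact sum_tripleProduct_contraction hcomp

/-- Triple contraction identity:
`∑ i n l, β m n i * β i k l * β n l p = C * β m k p`. -/
theorem beta_triple_contraction (N : ℕ) (hN : 0 < N) (C : ℝ) (hC : 0 < C)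
    (E : Fin N → Fin N → ℝ)
    (horth : ∀ k l : Fin N, (1 / C) * ∑ i, E k i * E l i = if k = l then 1 else 0)
    (hcomp : ∀ i j : Fin N, ∑ k, E k i * E k j = C * if i = j then 1 else 0)
    (β : Fin N → Fin N → Fin N → ℝ)
    (hβ : ∀ n m k : Fin N, β n m k = (1 / C) * ∑ i, E n i * E m i * E k i) :
    ∀ (m k p : Fin N),
      ∑ i, ∑ n, ∑ l, β m n i * β i k l * β n l p = C * β m k p :=
  beta_triple_contraction_general N C E hcomp β hβ
end

section
/- Under the stated orthonormality and completeness assumptions, for all indices m, n one has the double contraction identity ∑_{i, k} (β m i k) * (β i k n) = C * (if n = m then 1 else 0). -/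
/-!
Expanding both beta constants as node sums, the contraction over `k` is a Parseval identity for
the completeness relation `∑ k, E k a * E k b = C δ_ab`, which collapses the two node sums to a
single node `a`; the contraction over `i` is the diagonal of completeness and contributes another
factor `C`. What remains is `∑ a, E m a * E n a`, which orthonormality evaluates to `C δ_mn`.
-/

open Finset

section Completeness

variable {κ ι R : Type*} [Fintype κ] [Fintype ι] [DecidableEq ι] [CommSemiring R]
  {E : κ → ι → R} {c : R}

theorem sum_mul_sum_eq_of_completeness_s3
    (hcomp : ∀ a b, ∑ k, E k a * E k b = c * if a = b then 1 else 0) (u v : ι → R) :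
    ∑ k, (∑ a, u a * E k a) * (∑ b, v b * E k b) = c * ∑ a, u a * v a := by
  calc ∑ k, (∑ a, u a * E k a) * (∑ b, v b * E k b)
      = ∑ a, ∑ b, u a * v b * ∑ k, E k a * E k b := by
        simp only [sum_mul_sum]
        simp only [mul_sum]
        rw [sum_comm]
        refine sum_congr rfl fun a _ => ?_
        rw [sum_comm]
        exact sum_congr rfl fun b _ => sum_congr rfl fun k _ => by ring
    _ = c * ∑ a, u a * v a := by
        simp only [hcomp, mul_ite, mul_one, mul_zero, sum_ite_eq, mem_univ, if_true, mul_sum]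
        exact sum_congr rfl fun a _ => by ring

theorem sum_sum_triple_mul_triple_eq_of_completeness
    (hcomp : ∀ a b, ∑ k, E k a * E k b = c * if a = b then 1 else 0) (x y : ι → R) :
    ∑ i, ∑ k, (∑ a, x a * E i a * E k a) * (∑ b, y b * E i b * E k b)
      = c ^ 2 * ∑ a, x a * y a := by
  calc ∑ i, ∑ k, (∑ a, x a * E i a * E k a) * (∑ b, y b * E i b * E k b)
      = ∑ i, c * ∑ a, x a * y a * (E i a * E i a) := by
        refine sum_congr rfl fun i _ => (sum_mul_sum_eq_of_completeness_s3 hcomp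
          (fun a => x a * E i a) (fun b => y b * E i b)).trans ?_
        exact congrArg _ (sum_congr rfl fun a _ => by ring)
    _ = c * ∑ a, x a * y a * ∑ i, E i a * E i a := by
        rw [← mul_sum, sum_comm]
        simp only [mul_sum]
    _ = c ^ 2 * ∑ a, x a * y a := by
        simp only [hcomp, if_pos, mul_one, mul_sum]
        exact sum_congr rfl fun a _ => by ring

end Completeness

theorem beta_double_contraction_general (N : ℕ) (C : ℝ) (hC : 0 < C)
    (E : Fin N → Fin N → ℝ)
    (horth : ∀ k l : Fin N, (1 / C) * ∑ i, E k i * E l i = if k = l then 1 else 0)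
    (hcomp : ∀ i j : Fin N, ∑ k, E k i * E k j = C * if i = j then 1 else 0)
    (β : Fin N → Fin N → Fin N → ℝ)
    (hβ : ∀ n m k : Fin N, β n m k = (1 / C) * ∑ i, E n i * E m i * E k i) :
    ∀ (m n : Fin N),
      ∑ i, ∑ k, β m i k * β i k n = C * if n = m then 1 else 0 := by
  intro m n
  have hβ' : ∀ i k, β i k n = (1 / C) * ∑ b, E n b * E i b * E k b := fun i k => by
    rw [hβ]; exact congrArg _ (sum_congr rfl fun b _ => by ring)
  have hgram : ∑ a, E m a * E n a = C * if n = m then 1 else 0 := by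
    rw [← horth n m]; field_simp
    exact sum_congr rfl fun a _ => mul_comm _ _
  calc ∑ i, ∑ k, β m i k * β i k n
      = (1 / C) ^ 2 *
          ∑ i, ∑ k, (∑ a, E m a * E i a * E k a) * (∑ b, E n b * E i b * E k b) := by
        rw [mul_sum]; refine sum_congr rfl fun i _ => ?_
        rw [mul_sum]; refine sum_congr rfl fun k _ => ?_
        rw [hβ, hβ']; ring
    _ = C * if n = m then 1 else 0 := by
        rw [sum_sum_triple_mul_triple_eq_of_completeness hcomp, hgram]
        field_simp

/-- Double contraction identity:
`∑ i k, β m i k * β i k n = C * δ_{nm}`. -/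
theorem beta_double_contraction (N : ℕ) (hN : 0 < N) (C : ℝ) (hC : 0 < C)
    (E : Fin N → Fin N → ℝ)
    (horth : ∀ k l : Fin N, (1 / C) * ∑ i, E k i * E l i = if k = l then 1 else 0)
    (hcomp : ∀ i j : Fin N, ∑ k, E k i * E k j = C * if i = j then 1 else 0)
    (β : Fin N → Fin N → Fin N → ℝ)
    (hβ : ∀ n m k : Fin N, β n m k = (1 / C) * ∑ i, E n i * E m i * E k i) :
    ∀ (m n : Fin N),
      ∑ i, ∑ k, β m i k * β i k n = C * if n = m then 1 else 0 :=
  beta_double_contraction_general N C hC E horth hcomp β hβ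
end

section
/- For every real number n ≥ 2, Γ(1/n) · Γ(5/n) ≤ 3 · Γ(3/n)². Equivalently, the coefficient b = n^{4/n}·(3Γ(3/n)² − Γ(1/n)Γ(5/n))/Γ(1/n)² of the quartic term in the expansion of −ln Ṽ is nonnegative. -/
/-! The ratio `Γ(s) Γ(5s) / Γ(3s)²` (the kurtosis of the density `exp (-|t|^n)` at `s = 1/n`)
is monotone in `s > 0`. In Euler's product `Γ(s) = lim m^s m! / ∏_{j ≤ m} (s + j)` the powers
`m^s` and the factorials cancel from this ratio, leaving the product over `j` of
`(3s + j)² / ((s + j)(5s + j))`, and each of these factors increases with `s`. Hence the ratio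
at `s = 1/n ≤ 1/2` is at most its value at `s = 1/2`, which is `Γ(1/2) Γ(5/2) / Γ(3/2)² = 3`. -/

open Filter Finset Real Topology
open scoped Nat

noncomputable def gammaKurtosis (s : ℝ) : ℝ :=
  Gamma s * Gamma (5 * s) / Gamma (3 * s) ^ 2

lemma sq_three_mul_add_mul_le {x y c : ℝ} (hx : 0 ≤ x) (hxy : x ≤ y) (hc : 0 ≤ c) :
    (3 * x + c) ^ 2 * ((y + c) * (5 * y + c)) ≤ (3 * y + c) ^ 2 * ((x + c) * (5 * x + c)) := by
  have hdiff : (3 * y + c) ^ 2 * ((x + c) * (5 * x + c)) - (3 * x + c) ^ 2 * ((y + c) * (5 * y + c))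
      = 4 * c * (y - x) * (6 * x * y + c * (x + y)) := by ring
  have hy : 0 ≤ y := hx.trans hxy
  have : 0 ≤ 4 * c * (y - x) * (6 * x * y + c * (x + y)) :=
    mul_nonneg (mul_nonneg (by positivity) (sub_nonneg.2 hxy)) (by positivity)
  linarith

lemma prod_sq_three_mul_add_mul_le {x y : ℝ} (hx : 0 ≤ x) (hxy : x ≤ y) (m : ℕ) :
    (∏ j ∈ range (m + 1), (3 * x + j)) ^ 2 *
        ((∏ j ∈ range (m + 1), (y + j)) * ∏ j ∈ range (m + 1), (5 * y + j)) ≤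
      (∏ j ∈ range (m + 1), (3 * y + j)) ^ 2 *
        ((∏ j ∈ range (m + 1), (x + j)) * ∏ j ∈ range (m + 1), (5 * x + j)) := by
  have hy : 0 ≤ y := hx.trans hxy
  simp only [← prod_pow, ← prod_mul_distrib]
  exact prod_le_prod (fun j _ => by positivity)
    (fun j _ => sq_three_mul_add_mul_le hx hxy j.cast_nonneg)

lemma GammaSeq_mul_GammaSeq_mul_sq_le {x y : ℝ} (hx : 0 < x) (hxy : x ≤ y) (m : ℕ) :
    GammaSeq x m * GammaSeq (5 * x) m * GammaSeq (3 * y) m ^ 2 ≤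
      GammaSeq y m * GammaSeq (5 * y) m * GammaSeq (3 * x) m ^ 2 := by
  have hy : 0 < y := hx.trans_le hxy
  have hpow (s : ℝ) : (m : ℝ) ^ (5 * s) = ((m : ℝ) ^ s) ^ 5 ∧
      (m : ℝ) ^ (3 * s) = ((m : ℝ) ^ s) ^ 3 := by
    simp only [← rpow_natCast, ← rpow_mul m.cast_nonneg, mul_comm s]
    norm_num
  simp only [GammaSeq, div_mul_div_comm, div_pow, (hpow x).1, (hpow x).2, (hpow y).1, (hpow y).2]
  rw [div_le_div_iff₀ (by positivity) (by positivity)]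
  have hprod := mul_le_mul_of_nonneg_left (prod_sq_three_mul_add_mul_le hx.le hxy m)
    (by positivity : 0 ≤ ((m : ℝ) ^ x * (m : ℝ) ^ y) ^ 6 * (m ! : ℝ) ^ 4)
  convert hprod using 1 <;> ring

lemma Gamma_mul_Gamma_mul_sq_le {x y : ℝ} (hx : 0 < x) (hxy : x ≤ y) :
    Gamma x * Gamma (5 * x) * Gamma (3 * y) ^ 2 ≤ Gamma y * Gamma (5 * y) * Gamma (3 * x) ^ 2 := by
  have hlim (a b c : ℝ) : Tendsto (fun m : ℕ => GammaSeq a m * GammaSeq b m * GammaSeq c m ^ 2)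
      atTop (𝓝 (Gamma a * Gamma b * Gamma c ^ 2)) :=
    ((GammaSeq_tendsto_Gamma a).mul (GammaSeq_tendsto_Gamma b)).mul
      ((GammaSeq_tendsto_Gamma c).pow 2)
  exact le_of_tendsto_of_tendsto' (hlim _ _ _) (hlim _ _ _)
    (GammaSeq_mul_GammaSeq_mul_sq_le hx hxy)

lemma monotoneOn_gammaKurtosis : MonotoneOn gammaKurtosis (Set.Ioi 0) := by
  intro x (hx : 0 < x) y (hy : 0 < y) hxy
  rw [gammaKurtosis, gammaKurtosis, div_le_div_iff₀ (by positivity) (by positivity)]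
  exact Gamma_mul_Gamma_mul_sq_le hx hxy

lemma gammaKurtosis_one_half : gammaKurtosis (1 / 2) = 3 := by
  have hsqrt : √π ≠ 0 := (sqrt_pos.2 pi_pos).ne'
  have h32 : Gamma (3 * (1 / 2)) = 1 / 2 * √π := by
    rw [show (3 * (1 / 2) : ℝ) = 1 / 2 + 1 by norm_num, Gamma_add_one (by norm_num),
      Gamma_one_half_eq]
  have h52 : Gamma (5 * (1 / 2)) = 3 * (1 / 2) * (1 / 2 * √π) := by
    rw [show (5 * (1 / 2) : ℝ) = 3 * (1 / 2) + 1 by norm_num, Gamma_add_one (by norm_num), h32]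
  rw [gammaKurtosis, h32, h52, Gamma_one_half_eq]
  field_simp

/-- Nonnegativity of the quartic coefficient `b`:
`Γ(1/n) Γ(5/n) ≤ 3 Γ(3/n)²` for `n ≥ 2`. -/
theorem gamma_quartic_coeff_nonneg (n : ℝ) (hn : 2 ≤ n) :
    Real.Gamma (1 / n) * Real.Gamma (5 / n) ≤ 3 * Real.Gamma (3 / n) ^ 2 := by
  have hle : gammaKurtosis (1 / n) ≤ 3 :=
    gammaKurtosis_one_half ▸ monotoneOn_gammaKurtosis (by positivity : (0 : ℝ) < 1 / n)
      (by norm_num : (0 : ℝ) < 1 / 2) (one_div_le_one_div_of_le two_pos hn)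
  rwa [gammaKurtosis, div_le_iff₀ (by positivity), mul_one_div, mul_one_div] at hle
end

section
/- For every real number n ≥ 2, 15 · Γ(1/n) · Γ(5/n) · Γ(3/n) ≤ 30 · Γ(3/n)³ + Γ(1/n)² · Γ(7/n). Equivalently, the coefficient c = n^{6/n}·(30Γ(3/n)³ − 15Γ(1/n)Γ(5/n)Γ(3/n) + Γ(1/n)²Γ(7/n))/Γ(1/n)³ of the sextic term in the expansion of −ln Ṽ is nonnegative. -/
/-!
Write `α = 1/n ∈ (0, 1/2]`. After multiplying the claim by `9 Γ(3α)³`, the inequality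
`5 Γ(α) Γ(5α)³ ≤ 9 Γ(3α)³ Γ(7α)` reduces it to `270 b⁶ - 135 x b⁴ + 5 x³ = 5 (x - 3b²)² (x + 6b²) ≥ 0`
with `x = Γ(α) Γ(5α)` and `b = Γ(3α)`.
That Gamma inequality compares the products `Γ(α) Γ(5α)³ Γ(7α)⁻¹ Γ(3α)⁻³` at `α` and at `1/2`,
where they are explicit: the arguments on both sides have the same sum, so in Gauss's limit
formula `Γ(s) = lim nˢ n! / ∏_{j ≤ n} (s + j)` the powers of `n` cancel, and the comparison
reduces to a polynomial inequality for each factor `j`.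
-/

open Real Filter Finset
open scoped Nat

theorem Real.prod_GammaSeq_eq {ι : Type*} [Fintype ι] (a : ι → ℝ) {n : ℕ} (hn : 0 < n) :
    ∏ k, GammaSeq (a k) n
      = (n : ℝ) ^ (∑ k, a k) * (n ! : ℝ) ^ Fintype.card ι
        / ∏ j ∈ range (n + 1), ∏ k, (a k + j) := by
  simp only [GammaSeq]
  rw [prod_div_distrib, prod_mul_distrib, ← rpow_sum_of_pos (by positivity), prod_const,
    card_univ, Finset.prod_comm]

theorem Real.prod_Gamma_le_prod_Gamma {ι : Type*} [Fintype ι] {a b : ι → ℝ}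
    (ha : ∀ k, 0 < a k) (hsum : ∑ k, a k = ∑ k, b k)
    (hprod : ∀ j : ℕ, ∏ k, (a k + j) ≤ ∏ k, (b k + j)) :
    ∏ k, Gamma (b k) ≤ ∏ k, Gamma (a k) := by
  refine le_of_tendsto_of_tendsto (tendsto_finsetProd _ fun k _ ↦ GammaSeq_tendsto_Gamma (b k))
    (tendsto_finsetProd _ fun k _ ↦ GammaSeq_tendsto_Gamma (a k)) ?_
  filter_upwards [eventually_gt_atTop 0] with n hn
  rw [prod_GammaSeq_eq _ hn, prod_GammaSeq_eq _ hn, hsum]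
  have hpos (j : ℕ) : 0 < ∏ k, (a k + j) := prod_pos fun k _ ↦ by have := ha k; positivity
  exact div_le_div_of_nonneg_left (by positivity) (prod_pos fun j _ ↦ hpos j)
    (prod_le_prod (fun j _ ↦ (hpos j).le) fun j _ ↦ hprod j)

theorem sextic_prod_shift_le {α : ℝ} (hα : 0 ≤ α) (hα2 : α ≤ 1 / 2) {i : ℝ} (hi : 0 ≤ i) :
    (1 / 2 + i) * (5 / 2 + i) ^ 3 * (7 * α + i) * (3 * α + i) ^ 3
      ≤ (α + i) * (5 * α + i) ^ 3 * (7 / 2 + i) * (3 / 2 + i) ^ 3 := by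
  have hα' : 0 ≤ 1 / 2 - α := by linarith
  have hpoly : 0 ≤ (4 * i ^ 5 + 8 * i ^ 4) + α * (8 * i ^ 5 + 80 * i ^ 4 + 128 * i ^ 3)
      + α ^ 2 * (16 * i ^ 5 + 160 * i ^ 4 + 616 * i ^ 3 + 720 * i ^ 2)
      + α ^ 3 * (64 * i ^ 4 + 512 * i ^ 3 + 1440 * i ^ 2 + 1350 * i) := by positivity
  linear_combination mul_nonneg hα' hpoly

theorem Real.five_mul_Gamma_mul_Gamma_five_mul_pow_le {α : ℝ} (hα : 0 < α) (hα2 : α ≤ 1 / 2) :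
    5 * Gamma α * Gamma (5 * α) ^ 3 ≤ 9 * Gamma (3 * α) ^ 3 * Gamma (7 * α) := by
  have hprod := prod_Gamma_le_prod_Gamma
    (a := ![1 / 2, 5 / 2, 5 / 2, 5 / 2, 7 * α, 3 * α, 3 * α, 3 * α])
    (b := ![α, 5 * α, 5 * α, 5 * α, 7 / 2, 3 / 2, 3 / 2, 3 / 2])
    (by intro k; fin_cases k <;> simp <;> positivity)
    (by simp [Fin.sum_univ_eight]; ring)
    (fun j ↦ by
      simpa [Fin.prod_univ_eight, ← mul_assoc, pow_three] using
        sextic_prod_shift_le hα.le hα2 j.cast_nonneg)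
  have h32 : Gamma (3 / 2) = Gamma (1 / 2) / 2 := by
    rw [show (3 / 2 : ℝ) = 1 / 2 + 1 by norm_num, Gamma_add_one (by norm_num)]; ring
  have h52 : Gamma (5 / 2) = 3 / 4 * Gamma (1 / 2) := by
    rw [show (5 / 2 : ℝ) = 3 / 2 + 1 by norm_num, Gamma_add_one (by norm_num), h32]; ring
  have h72 : Gamma (7 / 2) = 15 / 8 * Gamma (1 / 2) := by
    rw [show (7 / 2 : ℝ) = 5 / 2 + 1 by norm_num, Gamma_add_one (by norm_num), h52]; ring
  simp only [Fin.prod_univ_eight, Matrix.cons_val] at hprod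
  rw [h32, h52, h72] at hprod
  have hg : 0 < 3 / 64 * Gamma (1 / 2) ^ 4 := by
    have := Gamma_pos_of_pos one_half_pos; positivity
  exact le_of_mul_le_mul_left (by linear_combination hprod) hg

/-- Nonnegativity of the sextic coefficient `c`:
`15 Γ(1/n) Γ(5/n) Γ(3/n) ≤ 30 Γ(3/n)³ + Γ(1/n)² Γ(7/n)` for `n ≥ 2`. -/
theorem gamma_sextic_coeff_nonneg (n : ℝ) (hn : 2 ≤ n) :
    15 * Real.Gamma (1 / n) * Real.Gamma (5 / n) * Real.Gamma (3 / n)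
      ≤ 30 * Real.Gamma (3 / n) ^ 3 + Real.Gamma (1 / n) ^ 2 * Real.Gamma (7 / n) := by
  set α := 1 / n
  have hα : 0 < α := by positivity
  have hα2 : α ≤ 1 / 2 := one_div_le_one_div_of_le two_pos hn
  rw [← mul_one_div 5 n, ← mul_one_div 3 n, ← mul_one_div 7 n]
  have key := five_mul_Gamma_mul_Gamma_five_mul_pow_le hα hα2
  have ha := Gamma_pos_of_pos hα
  have hb := Gamma_pos_of_pos (by positivity : 0 < 3 * α)
  have hc := Gamma_pos_of_pos (by positivity : 0 < 5 * α)
  set a := Gamma α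
  set b := Gamma (3 * α)
  set c := Gamma (5 * α)
  have hcube : 0 ≤ 5 * (a * c - 3 * b ^ 2) ^ 2 * (a * c + 6 * b ^ 2) := by positivity
  have hb3 : 0 < 9 * b ^ 3 := by positivity
  nlinarith [mul_le_mul_of_nonneg_left key (sq_nonneg a)]
end
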